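/- Assume the closed linear span of {κ(λ) : λ ∈ Ω} equals H. Let A be a bounded operator on H possessing a bounded inverse, let p ≥ 1 be a real exponent, and let S : [0,∞) × [0,∞) → [0,∞) be monotone increasing in each argument with S(a,a) = a for all a ≥ 0. Then A is unitary (A*∘A = A∘A* = I) if and only if N_{S,p}(A*∘A) ≤ 1 and N_{S,p}((A*∘A)^{−1}) ≤ 1. -/

import Mathlib

set_option maxHeartbeats 1000000


noncomputable section
open ContinuousLinearMap

variable {H : Type*} [NormedAddCommGroup H] [InnerProductSpace ℂ H] [CompleteSpace H]
variable {Ω : Type*}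

/-- The Berezin radius `ber(A) = sup_{λ∈Ω} |⟨A κ(λ), κ(λ)⟩|`. -/
def ber (κ : Ω → H) (A : H →L[ℂ] H) : ℝ :=
  ⨆ l : Ω, ‖(inner ℂ (A (κ l)) (κ l) : ℂ)‖

/-- The Berezin norm `‖A‖_ber = sup_{λ,μ∈Ω} |⟨A κ(λ), κ(μ)⟩|`. -/
def berNorm (κ : Ω → H) (A : H →L[ℂ] H) : ℝ :=
  ⨆ q : Ω × Ω, ‖(inner ℂ (A (κ q.1)) (κ q.2) : ℂ)‖

/-- `N_{S,p}(A) = sup_{λ,μ∈Ω} S(|⟨A κ(λ), κ(μ)⟩|^p, |⟨A* κ(λ), κ(μ)⟩|^p)`. -/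
def NS (S : ℝ → ℝ → ℝ) (p : ℝ) (κ : Ω → H) (A : H →L[ℂ] H) : ℝ :=
  ⨆ q : Ω × Ω, S (‖(inner ℂ (A (κ q.1)) (κ q.2) : ℂ)‖ ^ p)
    (‖(inner ℂ ((adjoint A) (κ q.1)) (κ q.2) : ℂ)‖ ^ p)

/-- `|X| = (X*X)^{1/2}` via continuous functional calculus. -/
def absOp (X : H →L[ℂ] H) : H →L[ℂ] H := cfc Real.sqrt (adjoint X * X)

/-- `h(|X|)^r` : continuous functional calculus of `|X|` applied to `s ↦ h(s)^r`. -/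
def opApply (h : ℝ → ℝ) (r : ℝ) (X : H →L[ℂ] H) : H →L[ℂ] H :=
  cfc (fun s : ℝ => h s ^ r) (absOp X)

theorem stmt8 [Nonempty Ω] (κ : Ω → H) (hκ : ∀ l, ‖κ l‖ = 1)
    (hspan : (Submodule.span ℂ (Set.range κ)).topologicalClosure = ⊤)
    (A : H →L[ℂ] H) (hA : IsUnit A)
    (p : ℝ) (hp : 1 ≤ p)
    (S : ℝ → ℝ → ℝ)
    (hS_nonneg : ∀ a b : ℝ, 0 ≤ a → 0 ≤ b → 0 ≤ S a b)
    (hS_mono₁ : ∀ b ∈ Set.Ici (0 : ℝ), MonotoneOn (fun a => S a b) (Set.Ici 0))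
    (hS_mono₂ : ∀ a ∈ Set.Ici (0 : ℝ), MonotoneOn (fun b => S a b) (Set.Ici 0))
    (hS_idem : ∀ a : ℝ, 0 ≤ a → S a a = a) :
    (adjoint A * A = 1 ∧ A * adjoint A = 1)
      ↔ (NS S p κ (adjoint A * A) ≤ 1 ∧ NS S p κ (Ring.inverse (adjoint A * A)) ≤ 1) := by
  have hp0 : (0:ℝ) ≤ p := le_trans zero_le_one hp
  have hstarT : star (adjoint A * A) = adjoint A * A := by
    rw [← star_eq_adjoint, star_mul, star_star]
  have hAdT : adjoint (adjoint A * A) = adjoint A * A := by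
    rw [← star_eq_adjoint (adjoint A * A)]; exact hstarT
  have hUT : IsUnit (adjoint A * A) := by
    refine IsUnit.mul ?_ hA
    rw [← star_eq_adjoint]; exact hA.star
  have hAdTi : adjoint (Ring.inverse (adjoint A * A)) = Ring.inverse (adjoint A * A) := by
    rw [← star_eq_adjoint (Ring.inverse (adjoint A * A)), ← Ring.inverse_star, hstarT]
  have hTiT : Ring.inverse (adjoint A * A) * (adjoint A * A) = 1 :=
    Ring.inverse_mul_cancel _ hUT
  have hTTi : (adjoint A * A) * Ring.inverse (adjoint A * A) = 1 :=
    Ring.mul_inverse_cancel _ hUT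
  have inner_le : ∀ (X : H →L[ℂ] H) (l m : Ω), ‖(inner ℂ (X (κ l)) (κ m) : ℂ)‖ ≤ ‖X‖ := by
    intro X l m
    calc ‖(inner ℂ (X (κ l)) (κ m) : ℂ)‖ ≤ ‖X (κ l)‖ * ‖κ m‖ := norm_inner_le_norm _ _
      _ ≤ (‖X‖ * ‖κ l‖) * ‖κ m‖ :=
          mul_le_mul_of_nonneg_right (X.le_opNorm _) (norm_nonneg _)
      _ = ‖X‖ := by rw [hκ l, hκ m]; ring
  have bdd : ∀ (X : H →L[ℂ] H), BddAbove (Set.range fun q : Ω × Ω =>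
      S (‖(inner ℂ (X (κ q.1)) (κ q.2) : ℂ)‖ ^ p)
        (‖(inner ℂ ((adjoint X) (κ q.1)) (κ q.2) : ℂ)‖ ^ p)) := by
    intro X
    have hM0 : 0 ≤ max ‖X‖ ‖adjoint X‖ := le_trans (norm_nonneg X) (le_max_left _ _)
    refine ⟨S ((max ‖X‖ ‖adjoint X‖) ^ p) ((max ‖X‖ ‖adjoint X‖) ^ p), ?_⟩
    rintro r ⟨q, rfl⟩
    have h1 : ‖(inner ℂ (X (κ q.1)) (κ q.2) : ℂ)‖ ^ p ≤ (max ‖X‖ ‖adjoint X‖) ^ p :=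
      Real.rpow_le_rpow (norm_nonneg _) (le_trans (inner_le X q.1 q.2) (le_max_left _ _)) hp0
    have h2 : ‖(inner ℂ ((adjoint X) (κ q.1)) (κ q.2) : ℂ)‖ ^ p ≤ (max ‖X‖ ‖adjoint X‖) ^ p :=
      Real.rpow_le_rpow (norm_nonneg _) (le_trans (inner_le _ q.1 q.2) (le_max_right _ _)) hp0
    have hm1 : (0:ℝ) ≤ ‖(inner ℂ (X (κ q.1)) (κ q.2) : ℂ)‖ ^ p := Real.rpow_nonneg (norm_nonneg _) _
    have hm2 : (0:ℝ) ≤ ‖(inner ℂ ((adjoint X) (κ q.1)) (κ q.2) : ℂ)‖ ^ p :=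
      Real.rpow_nonneg (norm_nonneg _) _
    have hMp : (0:ℝ) ≤ (max ‖X‖ ‖adjoint X‖) ^ p := Real.rpow_nonneg hM0 _
    calc S (‖(inner ℂ (X (κ q.1)) (κ q.2) : ℂ)‖ ^ p) (‖(inner ℂ ((adjoint X) (κ q.1)) (κ q.2) : ℂ)‖ ^ p)
        ≤ S ((max ‖X‖ ‖adjoint X‖) ^ p) (‖(inner ℂ ((adjoint X) (κ q.1)) (κ q.2) : ℂ)‖ ^ p) :=
          hS_mono₁ _ hm2 hm1 hMp h1
      _ ≤ S ((max ‖X‖ ‖adjoint X‖) ^ p) ((max ‖X‖ ‖adjoint X‖) ^ p) := hS_mono₂ _ hMp hm2 hMp h2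
  constructor
  · rintro ⟨h1, h2⟩
    rw [h1, Ring.inverse_one]
    have key : NS S p κ (1 : H →L[ℂ] H) ≤ 1 := by
      apply ciSup_le
      intro q
      have hadj1 : adjoint (1 : H →L[ℂ] H) = 1 := by rw [← star_eq_adjoint, star_one]
      rw [hadj1, hS_idem _ (Real.rpow_nonneg (norm_nonneg _) _)]
      have hn : ‖(inner ℂ ((1 : H →L[ℂ] H) (κ q.1)) (κ q.2) : ℂ)‖ ≤ 1 := by
        rw [ContinuousLinearMap.one_apply]
        calc ‖(inner ℂ (κ q.1) (κ q.2) : ℂ)‖ ≤ ‖κ q.1‖ * ‖κ q.2‖ := norm_inner_le_norm _ _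
          _ = 1 := by rw [hκ q.1, hκ q.2]; ring
      exact Real.rpow_le_one (norm_nonneg _) hn hp0
    exact ⟨key, key⟩
  · rintro ⟨h1, h2⟩
    have diag : ∀ (X : H →L[ℂ] H), adjoint X = X → NS S p κ X ≤ 1 →
        ∀ l, ‖(inner ℂ (X (κ l)) (κ l) : ℂ)‖ ≤ 1 := by
      intro X hX hNS l
      have hterm : S (‖(inner ℂ (X (κ l)) (κ l) : ℂ)‖ ^ p)
          (‖(inner ℂ ((adjoint X) (κ l)) (κ l) : ℂ)‖ ^ p) ≤ NS S p κ X := le_ciSup (bdd X) (l, l)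
      rw [hX, hS_idem _ (Real.rpow_nonneg (norm_nonneg _) _)] at hterm
      have hxp : ‖(inner ℂ (X (κ l)) (κ l) : ℂ)‖ ^ p ≤ 1 := le_trans hterm hNS
      by_contra hcon
      push_neg at hcon
      have : (1:ℝ) < ‖(inner ℂ (X (κ l)) (κ l) : ℂ)‖ ^ p := by
        calc (1:ℝ) = 1 ^ p := (Real.one_rpow p).symm
          _ < _ := Real.rpow_lt_rpow (by norm_num) hcon (lt_of_lt_of_le zero_lt_one hp)
      linarith
    have ha := diag _ hAdT h1
    have hb := diag _ hAdTi h2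
    have hT1 : adjoint A * A = 1 := by
      have key : ∀ l, (adjoint A * A) (κ l) = κ l := by
        intro l
        set T : H →L[ℂ] H := adjoint A * A with hT
        set Ti : H →L[ℂ] H := Ring.inverse (adjoint A * A) with hTi
        set x := κ l with hxdef
        have hTiTx : Ti (T x) = x := by
          have := congrArg (fun f : H →L[ℂ] H => f x) hTiT
          simpa [ContinuousLinearMap.mul_apply] using this
        have hTTix : T (Ti x) = x := by
          have := congrArg (fun f : H →L[ℂ] H => f x) hTTi
          simpa [ContinuousLinearMap.mul_apply] using this
        have hxx : (inner ℂ x x : ℂ) = 1 := by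
          rw [inner_self_eq_norm_sq_to_K, hκ l]; norm_num
        have hTiTx' : (inner ℂ (Ti x) (T x) : ℂ) = 1 := by
          calc (inner ℂ (Ti x) (T x) : ℂ) = inner ℂ (adjoint T (Ti x)) x := by
                rw [adjoint_inner_left]
            _ = 1 := by rw [hAdT, hTTix, hxx]
        have expand : (inner ℂ (Ti (T x - x)) (T x - x) : ℂ)
            = inner ℂ x (T x) + inner ℂ (Ti x) x - 2 := by
          rw [map_sub, inner_sub_left, inner_sub_right, inner_sub_right, hTiTx, hTiTx', hxx]
          ring
        -- positivity
        have hBBTi : Ti = Ring.inverse A * adjoint (Ring.inverse A) := by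
          have hright : T * (Ring.inverse A * adjoint (Ring.inverse A)) = 1 := by
            rw [← star_eq_adjoint A, ← star_eq_adjoint (Ring.inverse A)] at *
            calc star A * A * (Ring.inverse A * star (Ring.inverse A))
                = star A * ((A * Ring.inverse A) * star (Ring.inverse A)) := by
                  rw [mul_assoc (star A) A, ← mul_assoc A (Ring.inverse A)]
              _ = star A * star (Ring.inverse A) := by
                  rw [Ring.mul_inverse_cancel A hA, one_mul]
              _ = star (Ring.inverse A * A) := by rw [star_mul]
              _ = 1 := by rw [Ring.inverse_mul_cancel A hA, star_one]
          calc Ti = Ti * (T * (Ring.inverse A * adjoint (Ring.inverse A))) := by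
                rw [hright, mul_one]
            _ = (Ti * T) * (Ring.inverse A * adjoint (Ring.inverse A)) :=
                (mul_assoc Ti T _).symm
            _ = Ring.inverse A * adjoint (Ring.inverse A) := by rw [hTiT, one_mul]
        have hpos : ∀ z : H, (inner ℂ (Ti z) z : ℂ) = (‖adjoint (Ring.inverse A) z‖ : ℂ) ^ 2 := by
          intro z
          rw [hBBTi, ContinuousLinearMap.mul_apply, ← adjoint_inner_right (Ring.inverse A),
            inner_self_eq_norm_sq_to_K]
          norm_cast
        have hare : (inner ℂ (T x) x : ℂ).re ≤ 1 := by
          have h := ha l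
          calc (inner ℂ (T x) x : ℂ).re ≤ ‖(inner ℂ (T x) x : ℂ)‖ := Complex.re_le_norm _
            _ ≤ 1 := by exact h
        have hbre : (inner ℂ (Ti x) x : ℂ).re ≤ 1 := by
          have h := hb l
          calc (inner ℂ (Ti x) x : ℂ).re ≤ ‖(inner ℂ (Ti x) x : ℂ)‖ := Complex.re_le_norm _
            _ ≤ 1 := by exact h
        have hxTx : (inner ℂ x (T x) : ℂ).re = (inner ℂ (T x) x : ℂ).re := by
          simpa using inner_re_symm (𝕜 := ℂ) x (T x)
        have hyre : (‖adjoint (Ring.inverse A) (T x - x)‖ : ℝ) ^ 2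
            = (inner ℂ (T x) x : ℂ).re + (inner ℂ (Ti x) x : ℂ).re - 2 := by
          have h := hpos (T x - x)
          rw [expand, ← Complex.ofReal_pow] at h
          have h2 := congrArg Complex.re h
          rw [Complex.ofReal_re, Complex.sub_re, Complex.add_re, hxTx] at h2
          simpa using h2.symm
        have hBy0 : adjoint (Ring.inverse A) (T x - x) = 0 := by
          have hsq : ‖adjoint (Ring.inverse A) (T x - x)‖ ^ 2 ≤ 0 := by
            rw [hyre]; linarith
          have : ‖adjoint (Ring.inverse A) (T x - x)‖ = 0 := by
            nlinarith [norm_nonneg (adjoint (Ring.inverse A) (T x - x))]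
          exact norm_eq_zero.mp this
        have hUBadj : IsUnit (adjoint (Ring.inverse A)) := by
          rw [← star_eq_adjoint]
          exact (isUnit_ringInverse.mpr hA).star
        have hy0 : T x - x = 0 := by
          have h1' : Ring.inverse (adjoint (Ring.inverse A)) * adjoint (Ring.inverse A) = 1 :=
            Ring.inverse_mul_cancel _ hUBadj
          have := congrArg (fun f : H →L[ℂ] H => f (T x - x)) h1'
          simp only [ContinuousLinearMap.mul_apply, ContinuousLinearMap.one_apply, hBy0,
            map_zero] at this
          exact this.symm
        have := sub_eq_zero.mp hy0
        exact this
      have hdense : Dense ((Submodule.span ℂ (Set.range κ) : Submodule ℂ H) : Set H) :=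
        Submodule.dense_iff_topologicalClosure_eq_top.mpr hspan
      refine ContinuousLinearMap.ext_on hdense ?_
      rintro _ ⟨l, rfl⟩
      simpa using key l
    refine ⟨hT1, ?_⟩
    have hadj : adjoint A = Ring.inverse A := by
      calc adjoint A = adjoint A * (A * Ring.inverse A) := by
            rw [Ring.mul_inverse_cancel A hA, mul_one]
        _ = (adjoint A * A) * Ring.inverse A := (mul_assoc (adjoint A) A _).symm
        _ = Ring.inverse A := by rw [hT1, one_mul]
    rw [hadj]
    exact Ring.mul_inverse_cancel A hA
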